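/- Suppose J(r) = (1/L) V(|r|/L) where V : [0,∞) → ℝ is Lipschitz continuous with Lipschitz constant ℓ and V(r) = 0 for r > 1, and suppose Q ≤ L. Then for every coarse cell index k, Σ_{l ≠ k} sup_{σ ∈ S_N} |Δ_{kl}J(σ)| ≤ 16 Q² ℓ / L (in the sum, Δ_{kl}J is understood with its indices ordered so that the smaller index comes first). -/

import Mathlib

/-
A pair term `Δ_{ab}J` with `a ≠ b` is a sum of `Q²` deviations of `J(x - y)` from its average
over the two cells, so it is at most `Q²` times the oscillation of `J` between the cells. As `J`
is `ℓ/L²`-Lipschitz in `|r|` and `|x - y|` varies by at most `2Q` across a pair of cells, each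
pair term is at most `2Q³ℓ/L²`. It vanishes once the cells are more than `⌈L/Q⌉` apart, since `J`
is supported in `|r| ≤ L`; so at most `2⌈L/Q⌉ ≤ 4L/Q` cells `l ≠ k` contribute.
-/

open Finset

/-- The spin value of a site: `true ↦ +1`, `false ↦ -1`. -/
def spin (b : Bool) : ℤ := if b then 1 else -1

/-- The coarse cell `C_k = {kQ, …, (k+1)Q - 1}` inside the lattice `Fin (M*Q)`. -/
def cell (M Q : ℕ) (k : Fin M) : Finset (Fin (M * Q)) :=
  univ.filter (fun x => x.val / Q = k.val)

/-- The coarse-graining map `F(σ)(k) = Σ_{x ∈ C_k} σ(x)`. -/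
def cg (M Q : ℕ) (σ : Fin (M * Q) → Bool) (k : Fin M) : ℤ :=
  ∑ x ∈ cell M Q k, spin (σ x)

/-- The long-range Hamiltonian `H^l(σ) = -(1/2) Σ_{x ≠ y} J(x-y) σ(x) σ(y)`. -/
noncomputable def Hlong (M Q : ℕ) (J : ℤ → ℝ) (σ : Fin (M * Q) → Bool) : ℝ :=
  -(1 / 2) * ∑ x : Fin (M * Q), ∑ y ∈ univ.filter (fun y => y ≠ x),
    J ((x.val : ℤ) - (y.val : ℤ)) * (spin (σ x) : ℝ) * (spin (σ y) : ℝ)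

/-- Cell-averaged couplings `J̄(k,l)`. -/
noncomputable def Jbar (M Q : ℕ) (J : ℤ → ℝ) (k l : Fin M) : ℝ :=
  if k = l then
    (∑ x ∈ cell M Q k, ∑ y ∈ (cell M Q k).filter (fun y => y ≠ x),
        J ((x.val : ℤ) - (y.val : ℤ))) / ((Q : ℝ) * ((Q : ℝ) - 1))
  else
    (∑ x ∈ cell M Q k, ∑ y ∈ cell M Q l, J ((x.val : ℤ) - (y.val : ℤ))) / ((Q : ℝ) ^ 2)

/-- The coarse-grained long-range Hamiltonian `H̄^{l,(0)}(η)`. -/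
noncomputable def Hlong0 (M Q : ℕ) (J : ℤ → ℝ) (η : Fin M → ℤ) : ℝ :=
  -(1 / 2) * (∑ k : Fin M, ∑ l ∈ univ.filter (fun l => l ≠ k),
      Jbar M Q J k l * (η k : ℝ) * (η l : ℝ))
  - (1 / 2) * ∑ k : Fin M, Jbar M Q J k k * ((η k : ℝ) ^ 2 - (Q : ℝ))

/-- The pair term `Δ_{kl}J(σ)` of the decomposition of `H^l - H̄^{l,(0)} ∘ F`. -/
noncomputable def DeltaJ (M Q : ℕ) (J : ℤ → ℝ) (k l : Fin M)
    (σ : Fin (M * Q) → Bool) : ℝ :=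
  -(1 / 2) * (2 - if k = l then 1 else 0) *
    ∑ x ∈ cell M Q k, ∑ y ∈ (cell M Q l).filter (fun y => y ≠ x),
      (J ((x.val : ℤ) - (y.val : ℤ)) - Jbar M Q J k l) * (spin (σ x) : ℝ) * (spin (σ y) : ℝ)

section Cells

variable {M Q : ℕ}

lemma mem_cell_iff (k : Fin M) (x : Fin (M * Q)) :
    x ∈ cell M Q k ↔ k.val * Q ≤ x.val ∧ x.val < k.val * Q + Q := by
  simp only [cell, mem_filter, mem_univ, true_and]
  constructor
  · intro h
    rw [← h]
    have hQ : 0 < Q := Nat.pos_of_mul_pos_left x.pos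
    exact ⟨Nat.div_mul_le_self _ _, Nat.lt_div_mul_add hQ⟩
  · rintro ⟨hlo, hhi⟩
    exact Nat.div_eq_of_lt_le hlo (by rwa [Nat.succ_mul])

lemma card_cell (k : Fin M) : #(cell M Q k) = Q := by
  have hk : k.val * Q + Q ≤ M * Q := by nlinarith [k.isLt]
  have hmap : (cell M Q k).map Fin.valEmbedding = Ico (k.val * Q) (k.val * Q + Q) := by
    ext n
    simp only [mem_map, Fin.valEmbedding_apply, mem_Ico, mem_cell_iff]
    constructor
    · rintro ⟨x, hx, rfl⟩
      exact hx
    · intro hn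
      exact ⟨⟨n, by omega⟩, hn, rfl⟩
  rw [← card_map, hmap, Nat.card_Ico]
  omega

lemma ne_of_mem_cell {a b : Fin M} (hab : a ≠ b) {x y : Fin (M * Q)}
    (hx : x ∈ cell M Q a) (hy : y ∈ cell M Q b) : y ≠ x := by
  rintro rfl
  simp only [cell, mem_filter] at hx hy
  exact hab (Fin.ext (hx.2 ▸ hy.2))

lemma abs_sub_sub_le_of_mem_cell {a b : Fin M} {x x' y y' : Fin (M * Q)}
    (hx : x ∈ cell M Q a) (hx' : x' ∈ cell M Q a) (hy : y ∈ cell M Q b) (hy' : y' ∈ cell M Q b) :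
    |((x.val : ℤ) - y.val) - ((x'.val : ℤ) - y'.val)| ≤ 2 * Q := by
  rw [mem_cell_iff] at hx hx' hy hy'
  rw [abs_le]
  omega

lemma lt_sub_of_mem_cell {a b : Fin M} {D : ℕ} (hab : a.val + D < b.val) {x y : Fin (M * Q)}
    (hx : x ∈ cell M Q a) (hy : y ∈ cell M Q b) : (D : ℤ) * Q < (y.val : ℤ) - x.val := by
  rw [mem_cell_iff] at hx hy
  have : (a.val + D + 1) * Q ≤ b.val * Q := Nat.mul_le_mul_right Q hab
  zify at this hx hy
  nlinarith

end Cells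

lemma card_filter_ne_le_add_le (k : Fin M) (D : ℕ) :
    #{l : Fin M | l ≠ k ∧ l.val ≤ k.val + D ∧ k.val ≤ l.val + D} ≤ 2 * D := by
  calc _ ≤ #((Icc (-(D : ℤ)) D).erase 0) := by
        refine card_le_card_of_injOn (fun l : Fin M => (l.val : ℤ) - k.val) (fun l hl => ?_)
          (fun a _ b _ h => Fin.ext (by simpa using h))
        simp only [coe_filter, Set.mem_ofPred_eq, Fin.ne_iff_vne] at hl
        simp only [coe_erase, coe_Icc, Set.mem_sdiff, Set.mem_Icc, Set.mem_singleton_iff]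
        omega
    _ = 2 * D := by
      rw [card_erase_of_mem (by simp), Int.card_Icc]
      omega

lemma abs_sub_sum_div_card_le {ι : Type*} {s : Finset ι} {f : ι → ℝ} {ε : ℝ}
    (hf : ∀ i ∈ s, ∀ j ∈ s, |f i - f j| ≤ ε) {i : ι} (hi : i ∈ s) :
    |f i - (∑ j ∈ s, f j) / #s| ≤ ε := by
  have hs : (0 : ℝ) < #s := by exact_mod_cast card_pos.2 ⟨i, hi⟩
  have hdev : f i - (∑ j ∈ s, f j) / #s = (∑ j ∈ s, (f i - f j)) / #s := by
    rw [sum_sub_distrib, sum_const, nsmul_eq_mul]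
    field_simp
  rw [hdev, abs_div, abs_of_pos hs, div_le_iff₀ hs]
  calc |∑ j ∈ s, (f i - f j)| ≤ ∑ j ∈ s, |f i - f j| := abs_sum_le_sum_abs _ _
    _ ≤ ∑ _j ∈ s, ε := sum_le_sum fun j hj => hf i hi j hj
    _ = ε * #s := by rw [sum_const, nsmul_eq_mul, mul_comm]

lemma abs_spin (b : Bool) : |(spin b : ℝ)| = 1 := by
  cases b <;> simp [spin]

lemma abs_sum_sum_mul_spin_le {α β : Type*} (s : Finset α) (t : Finset β) (c : α → β → ℝ)
    (σ : α → Bool) (τ : β → Bool) :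
    |∑ x ∈ s, ∑ y ∈ t, c x y * (spin (σ x) : ℝ) * (spin (τ y) : ℝ)| ≤ ∑ x ∈ s, ∑ y ∈ t, |c x y| :=
  (abs_sum_le_sum_abs (G := ℝ) _ _).trans <| sum_le_sum fun _ _ =>
    (abs_sum_le_sum_abs _ _).trans <| le_of_eq <| sum_congr rfl fun _ _ => by
      rw [abs_mul, abs_mul, abs_spin, abs_spin, mul_one, mul_one]

section PairTerms

variable {M Q : ℕ} {J : ℤ → ℝ} {a b : Fin M}

lemma Jbar_of_ne (hab : a ≠ b) :
    Jbar M Q J a b =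
      (∑ p ∈ cell M Q a ×ˢ cell M Q b, J (((p.1 : Fin (M * Q)).val : ℤ) - (p.2 : Fin (M * Q)).val))
        / #(cell M Q a ×ˢ cell M Q b) := by
  rw [Jbar, if_neg hab, sum_product, card_product, card_cell, card_cell, Nat.cast_mul, sq]

lemma DeltaJ_of_ne (hab : a ≠ b) (σ : Fin (M * Q) → Bool) :
    DeltaJ M Q J a b σ = -∑ x ∈ cell M Q a, ∑ y ∈ cell M Q b,
      (J ((x.val : ℤ) - y.val) - Jbar M Q J a b) * (spin (σ x) : ℝ) * (spin (σ y) : ℝ) := by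
  rw [DeltaJ, if_neg hab,
    sum_congr rfl fun x hx => by rw [filter_true_of_mem fun y hy => ne_of_mem_cell hab hx hy]]
  ring

lemma abs_DeltaJ_le (hab : a ≠ b) {ε : ℝ}
    (hε : ∀ x ∈ cell M Q a, ∀ x' ∈ cell M Q a, ∀ y ∈ cell M Q b, ∀ y' ∈ cell M Q b,
      |J ((x.val : ℤ) - y.val) - J ((x'.val : ℤ) - y'.val)| ≤ ε)
    (σ : Fin (M * Q) → Bool) :
    |DeltaJ M Q J a b σ| ≤ Q ^ 2 * ε := by
  have hdev : ∀ x ∈ cell M Q a, ∀ y ∈ cell M Q b,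
      |J ((x.val : ℤ) - y.val) - Jbar M Q J a b| ≤ ε := by
    intro x hx y hy
    rw [Jbar_of_ne hab]
    refine abs_sub_sum_div_card_le
      (f := fun p : Fin (M * Q) × Fin (M * Q) => J ((p.1.val : ℤ) - p.2.val)) ?_
      (mem_product.2 ⟨hx, hy⟩ : (x, y) ∈ cell M Q a ×ˢ cell M Q b)
    rintro ⟨x₁, y₁⟩ h₁ ⟨x₂, y₂⟩ h₂
    rw [mem_product] at h₁ h₂
    exact hε x₁ h₁.1 x₂ h₂.1 y₁ h₁.2 y₂ h₂.2
  rw [DeltaJ_of_ne hab, abs_neg]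
  calc _ ≤ ∑ x ∈ cell M Q a, ∑ y ∈ cell M Q b, |J ((x.val : ℤ) - y.val) - Jbar M Q J a b| :=
        abs_sum_sum_mul_spin_le _ _ _ σ σ
    _ ≤ ∑ _x ∈ cell M Q a, ∑ _y ∈ cell M Q b, ε :=
        sum_le_sum fun x hx => sum_le_sum fun y hy => hdev x hx y hy
    _ = Q ^ 2 * ε := by simp only [sum_const, card_cell, nsmul_eq_mul]; ring

end PairTerms

section RadialCoupling

variable {L l : ℝ} {V : ℝ → ℝ} {J : ℤ → ℝ}

lemma abs_sub_le_of_radial (hL : 0 < L) (hl : 0 ≤ l)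
    (hV : ∀ a b : ℝ, 0 ≤ a → 0 ≤ b → |V a - V b| ≤ l * |a - b|)
    (hJ : ∀ r : ℤ, J r = (1 / L) * V (|(r : ℝ)| / L)) (r s : ℤ) :
    |J r - J s| ≤ l / L ^ 2 * |((r - s : ℤ) : ℝ)| := by
  rw [hJ, hJ, ← mul_sub, abs_mul, abs_of_pos (one_div_pos.2 hL)]
  calc 1 / L * |V (|(r : ℝ)| / L) - V (|(s : ℝ)| / L)|
      ≤ 1 / L * (l * |(|(r : ℝ)| - |(s : ℝ)|) / L|) := by
        gcongr
        rw [sub_div]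
        exact hV _ _ (by positivity) (by positivity)
    _ ≤ 1 / L * (l * (|((r - s : ℤ) : ℝ)| / L)) := by
        rw [abs_div, abs_of_pos hL, Int.cast_sub]
        gcongr 1 / L * (l * (?_ / L))
        exact abs_abs_sub_abs_le_abs_sub (r : ℝ) s
    _ = l / L ^ 2 * |((r - s : ℤ) : ℝ)| := by field_simp

lemma eq_zero_of_radial (hL : 0 < L) (hVsupp : ∀ r : ℝ, 1 < r → V r = 0)
    (hJ : ∀ r : ℤ, J r = (1 / L) * V (|(r : ℝ)| / L)) {r : ℤ} (hr : L < |(r : ℝ)|) : J r = 0 := by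
  rw [hJ, hVsupp _ ((one_lt_div hL).2 hr), mul_zero]

variable {M Q : ℕ} {a b : Fin M}

lemma abs_DeltaJ_le_of_radial (hL : 0 < L) (hl : 0 ≤ l)
    (hV : ∀ a b : ℝ, 0 ≤ a → 0 ≤ b → |V a - V b| ≤ l * |a - b|)
    (hJ : ∀ r : ℤ, J r = (1 / L) * V (|(r : ℝ)| / L)) (hab : a ≠ b) (σ : Fin (M * Q) → Bool) :
    |DeltaJ M Q J a b σ| ≤ Q ^ 2 * (l / L ^ 2 * (2 * Q)) := by
  refine abs_DeltaJ_le hab (fun x hx x' hx' y hy y' hy' => ?_) σ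
  refine (abs_sub_le_of_radial hL hl hV hJ _ _).trans ?_
  gcongr
  rw [← Int.cast_abs]
  exact_mod_cast abs_sub_sub_le_of_mem_cell hx hx' hy hy'

lemma DeltaJ_eq_zero_of_radial (hL : 0 < L) (hVsupp : ∀ r : ℝ, 1 < r → V r = 0)
    (hJ : ∀ r : ℤ, J r = (1 / L) * V (|(r : ℝ)| / L)) {D : ℕ} (hD : L ≤ D * Q)
    (hab : a.val + D < b.val) (σ : Fin (M * Q) → Bool) : DeltaJ M Q J a b σ = 0 := by
  have hfar : ∀ x ∈ cell M Q a, ∀ y ∈ cell M Q b, J ((x.val : ℤ) - y.val) = 0 := by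
    intro x hx y hy
    refine eq_zero_of_radial hL hVsupp hJ ?_
    have hgap : ((D * Q : ℤ) : ℝ) < ((y.val - x.val : ℤ) : ℝ) :=
      Int.cast_lt.2 (lt_sub_of_mem_cell hab hx hy)
    push_cast at hgap ⊢
    rw [abs_sub_comm]
    linarith [le_abs_self ((y.val : ℝ) - x.val)]
  have hne : a ≠ b := by rintro rfl; omega
  have h := abs_DeltaJ_le (J := J) (ε := 0) hne (fun x hx x' hx' y hy y' hy' => by
    rw [hfar x hx y hy, hfar x' hx' y' hy', sub_zero, abs_zero]) σ
  rwa [mul_zero, abs_nonpos_iff] at h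

end RadialCoupling

theorem statement8_general (M Q : ℕ) (hQ : 2 ≤ Q)
    (L l : ℝ) (hL : 0 < L) (hl : 0 ≤ l) (hQL : (Q : ℝ) ≤ L)
    (V : ℝ → ℝ) (hV : ∀ a b : ℝ, 0 ≤ a → 0 ≤ b → |V a - V b| ≤ l * |a - b|)
    (hVsupp : ∀ r : ℝ, 1 < r → V r = 0)
    (J : ℤ → ℝ) (hJ : ∀ r : ℤ, J r = (1 / L) * V (|(r : ℝ)| / L)) :
    ∀ k : Fin M,
      ∑ l' ∈ univ.filter (fun l' => l' ≠ k),
        (⨆ σ : Fin (M * Q) → Bool, |DeltaJ M Q J (min k l') (max k l') σ|)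
      ≤ 16 * (Q : ℝ) ^ 2 * l / L := by
  intro k
  have hQ0 : (0 : ℝ) < Q := by exact_mod_cast (by omega : 0 < Q)
  set D := ⌈L / Q⌉₊
  have hLD : L ≤ D * Q := (div_le_iff₀ hQ0).1 (Nat.le_ceil _)
  have hDL : (D : ℝ) * Q ≤ 2 * L :=
    calc (D : ℝ) * Q ≤ (L / Q + 1) * Q := by gcongr; exact (Nat.ceil_lt_add_one (by positivity)).le
      _ = L + Q := by field_simp
      _ ≤ 2 * L := by linarith
  set B : ℝ := Q ^ 2 * (l / L ^ 2 * (2 * Q))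
  have hterm : ∀ l' ∈ univ.filter (fun l' => l' ≠ k),
      ⨆ σ : Fin (M * Q) → Bool, |DeltaJ M Q J (min k l') (max k l') σ|
        ≤ if l'.val ≤ k.val + D ∧ k.val ≤ l'.val + D then B else 0 := by
    intro l' hl'
    have hne : l' ≠ k := (mem_filter.1 hl').2
    split_ifs with hnear
    · exact ciSup_le fun σ => abs_DeltaJ_le_of_radial hL hl hV hJ (min_lt_max.2 hne.symm).ne σ
    · refine ciSup_le fun σ => (abs_eq_zero.2 (DeltaJ_eq_zero_of_radial hL hVsupp hJ hLD ?_ σ)).le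
      rcases hne.lt_or_gt with h | h
      · rw [min_eq_right h.le, max_eq_left h.le]
        omega
      · rw [min_eq_left h.le, max_eq_right h.le]
        omega
  calc _ ≤ ∑ l' ∈ univ.filter (fun l' => l' ≠ k),
        if l'.val ≤ k.val + D ∧ k.val ≤ l'.val + D then B else 0 := sum_le_sum hterm
    _ = #{l : Fin M | l ≠ k ∧ l.val ≤ k.val + D ∧ k.val ≤ l.val + D} * B := by
        rw [sum_ite, sum_const_zero, add_zero, sum_const, nsmul_eq_mul, filter_filter]
    _ ≤ (2 * D : ℕ) * B := by gcongr; exact card_filter_ne_le_add_le k D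
    _ = 4 * (D * Q) * (Q ^ 2 * l) / L ^ 2 := by push_cast; ring
    _ ≤ 4 * (2 * L) * (Q ^ 2 * l) / L ^ 2 := by gcongr
    _ = 8 * Q ^ 2 * l / L := by field_simp; ring
    _ ≤ 16 * Q ^ 2 * l / L := by gcongr; norm_num

/-- summability of the pair terms: for each coarse cell `k`, the sum over
`l ≠ k` of the sup over configurations of `|Δ_{kl}J|` is at most `16Q²ℓ/L`. -/
theorem statement8 (M Q : ℕ) (hM : 1 ≤ M) (hQ : 2 ≤ Q)
    (L l : ℝ) (hL : 0 < L) (hl : 0 ≤ l) (hQL : (Q : ℝ) ≤ L)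
    (V : ℝ → ℝ) (hV : ∀ a b : ℝ, 0 ≤ a → 0 ≤ b → |V a - V b| ≤ l * |a - b|)
    (hVsupp : ∀ r : ℝ, 1 < r → V r = 0)
    (J : ℤ → ℝ) (hJ : ∀ r : ℤ, J r = (1 / L) * V (|(r : ℝ)| / L)) :
    ∀ k : Fin M,
      ∑ l' ∈ univ.filter (fun l' => l' ≠ k),
        (⨆ σ : Fin (M * Q) → Bool, |DeltaJ M Q J (min k l') (max k l') σ|)
      ≤ 16 * (Q : ℝ) ^ 2 * l / L :=
  statement8_general M Q hQ L l hL hl hQL V hV hVsupp J hJ
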